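/- arXiv:1010.0967 — 6 statements merged into one kernel-verified Lean document; each statement's English description precedes it below -/
import Mathlib

section
/- Let R be an integral domain with finite quotients, K its field of fractions. The profinite completions R̂ = lim← R/(m) (over m ∈ R \ {0} with divisibility) and R̂_K = lim← (R + (w))/(w) (over w ∈ K× with the extended divisibility order) are isomorphic as topological rings. -/
variable (R : Type*) [CommRing R] [IsDomain R]
variable (K : Type*) [Field K] [Algebra R K] [IsFractionRing R K]

/-- Each quotient `R/(m)` carries the discrete topology. -/
instance (I : Ideal R) : TopologicalSpace (R ⧸ I) := ⊥

/-- The profinite completion `R̂ = lim← R/(m)` over `m ∈ R \ {0}` directed by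
divisibility, as the subring of compatible families in `Π_{m ≠ 0} R/(m)`. -/
def compatRing : Subring (∀ m : {m : R // m ≠ 0}, R ⧸ Ideal.span {(m : R)}) where
  carrier := {x | ∀ (m m' : {m : R // m ≠ 0}) (h : (m : R) ∣ (m' : R)),
    Ideal.Quotient.factor (Ideal.span_singleton_le_span_singleton.mpr h) (x m') = x m}
  zero_mem' := by intro m m' h; simp
  one_mem' := by intro m m' h; simp [Pi.one_apply, map_one]
  add_mem' := by intro a b ha hb m m' h; simp [Pi.add_apply, map_add, ha m m' h, hb m m' h]
  neg_mem' := by intro a ha m m' h; simp [Pi.neg_apply, map_neg, ha m m' h]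
  mul_mem' := by intro a b ha hb m m' h; simp [Pi.mul_apply, map_mul, ha m m' h, hb m m' h]

/-- The fractional ideal `(w) = wR ⊆ K`, as an additive subgroup of `K`. -/
def Jw (w : K) : AddSubgroup K := (Submodule.span R {w}).toAddSubgroup

theorem Jw_le {w w' : K} (h : ∃ r : R, w' = w * algebraMap R K r) :
    Jw R K w' ≤ Jw R K w := by
  obtain ⟨r, rfl⟩ := h
  intro x hx
  have hsub : Submodule.span R {w * algebraMap R K r} ≤ Submodule.span R {w} := by
    rw [Submodule.span_le, Set.singleton_subset_iff]
    rw [mul_comm, ← Algebra.smul_def]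
    exact Submodule.smul_mem _ _ (Submodule.mem_span_singleton_self w)
  exact hsub hx

/-- The canonical projection `K/(w') → K/(w)` when `w ∣ w'`; on classes of elements of
`R + (w')` this is the canonical projection `p_{w,w'} : (R+(w'))/(w') → (R+(w))/(w)`. -/
def projw (w w' : K) (h : ∃ r : R, w' = w * algebraMap R K r) :
    K ⧸ Jw R K w' →+ K ⧸ Jw R K w :=
  QuotientAddGroup.map _ _ (AddMonoidHom.id K) (fun x hx => Jw_le R K h hx)

/-- Each quotient `K/(w)` (hence each `(R+(w))/(w)`) carries the discrete topology. -/
instance (w : K) : TopologicalSpace (K ⧸ Jw R K w) := ⊥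

/-- The profinite completion `R̂_K = lim← (R+(w))/(w)` over `w ∈ K×` (with the
divisibility order `w ≤ w' ↔ ∃ r ∈ R, w' = wr`), realised inside `Π_{w ∈ K×} K/(w)` as
the families of classes of elements of `R` compatible under the projections. -/
abbrev RhatK := {x : ∀ w : {w : K // w ≠ 0}, K ⧸ Jw R K w.1 //
  (∀ w : {w : K // w ≠ 0}, ∃ r : R, x w = QuotientAddGroup.mk (algebraMap R K r)) ∧
  ∀ (w w' : {w : K // w ≠ 0}) (h : ∃ r : R, w'.1 = w.1 * algebraMap R K r),
    projw R K w.1 w'.1 h (x w') = x w}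
section Aux

variable {R K}

namespace Stmt6Aux

noncomputable def qlift {I : Ideal R} (q : R ⧸ I) : R :=
  (Ideal.Quotient.mk_surjective q).choose

lemma qlift_spec {I : Ideal R} (q : R ⧸ I) : Ideal.Quotient.mk I (qlift q) = q :=
  (Ideal.Quotient.mk_surjective q).choose_spec

noncomputable def num (w : K) : R :=
  (IsLocalization.surj (nonZeroDivisors R) w).choose.1

noncomputable def den (w : K) : R :=
  ((IsLocalization.surj (nonZeroDivisors R) w).choose.2 : R)

lemma rep_spec (w : K) : w * algebraMap R K (den w) = algebraMap R K (num w) :=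
  (IsLocalization.surj (nonZeroDivisors R) w).choose_spec

lemma den_ne (w : K) : (den w : R) ≠ 0 :=
  nonZeroDivisors.ne_zero (IsLocalization.surj (nonZeroDivisors R) w).choose.2.2

lemma alg_ne {b : R} (hb : b ≠ 0) : algebraMap R K b ≠ 0 := by
  simpa using (map_ne_zero_iff _ (IsFractionRing.injective R K)).mpr hb

lemma num_ne {w : K} (hw : w ≠ 0) : (num w : R) ≠ 0 := by
  intro h0
  apply hw
  have := rep_spec (R := R) w
  rw [h0, map_zero] at this
  exact (mul_eq_zero.mp this).resolve_right (alg_ne (den_ne w))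

lemma mem_Jw {w x : K} : x ∈ Jw R K w ↔ ∃ c : R, c • w = x := by
  show x ∈ (Submodule.span R {w}).toAddSubgroup ↔ _
  rw [Submodule.mem_toAddSubgroup, Submodule.mem_span_singleton]

lemma mkJ_eq {w : K} {a b : R} (h : w * algebraMap R K b = algebraMap R K a)
    {r r' : R} (hd : a ∣ r - r') :
    (QuotientAddGroup.mk (algebraMap R K r) : K ⧸ Jw R K w) =
      QuotientAddGroup.mk (algebraMap R K r') := by
  obtain ⟨u, hu⟩ := hd
  rw [QuotientAddGroup.eq]
  rw [mem_Jw]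
  refine ⟨-(b * u), ?_⟩
  have h1 : algebraMap R K (r - r') = (b * u) • w := by
    rw [hu, map_mul, Algebra.smul_def, map_mul, ← h]; ring
  rw [neg_smul, ← h1, map_sub]; ring

lemma key (x : compatRing R) {w : K}
    {a b : R} (ha : a ≠ 0) (hb : b ≠ 0) (h : w * algebraMap R K b = algebraMap R K a)
    {a' b' : R} (ha' : a' ≠ 0) (hb' : b' ≠ 0) (h' : w * algebraMap R K b' = algebraMap R K a')
    {r r' : R} (hr : Ideal.Quotient.mk (Ideal.span {a}) r = x.1 ⟨a, ha⟩)
    (hr' : Ideal.Quotient.mk (Ideal.span {a'}) r' = x.1 ⟨a', ha'⟩) :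
    (QuotientAddGroup.mk (algebraMap R K r) : K ⧸ Jw R K w) =
      QuotientAddGroup.mk (algebraMap R K r') := by
  have hab : a * b' = a' * b := by
    apply IsFractionRing.injective R K
    rw [map_mul, map_mul, ← h, ← h']; ring
  have hab0 : a * b' ≠ 0 := mul_ne_zero ha hb'
  set s := qlift (x.1 ⟨a * b', hab0⟩) with hs
  have hss : Ideal.Quotient.mk (Ideal.span {a * b'}) s = x.1 ⟨a * b', hab0⟩ := qlift_spec _
  have hc1 : Ideal.Quotient.mk (Ideal.span {a}) s = x.1 ⟨a, ha⟩ := by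
    have := x.2 ⟨a, ha⟩ ⟨a * b', hab0⟩ ⟨b', rfl⟩
    rw [← this, ← hss, Ideal.Quotient.factor_mk]
  have hc2 : Ideal.Quotient.mk (Ideal.span {a'}) s = x.1 ⟨a', ha'⟩ := by
    have := x.2 ⟨a', ha'⟩ ⟨a * b', hab0⟩ ⟨b, hab⟩
    rw [← this, ← hss, Ideal.Quotient.factor_mk]
  have d1 : a ∣ r - s := by
    rw [← Ideal.mem_span_singleton]
    rw [← Ideal.Quotient.eq]
    rw [hr, hc1]
  have d2 : a' ∣ s - r' := by
    rw [← Ideal.mem_span_singleton, ← Ideal.Quotient.eq, hc2, hr']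
  calc (QuotientAddGroup.mk (algebraMap R K r) : K ⧸ Jw R K w)
      = QuotientAddGroup.mk (algebraMap R K s) := mkJ_eq h d1
    _ = QuotientAddGroup.mk (algebraMap R K r') := mkJ_eq h' d2

set_option linter.unusedSectionVars false
set_option linter.unusedVariables false

noncomputable def phi (x : compatRing R) (w : {w : K // w ≠ 0}) : K ⧸ Jw R K w.1 :=
  QuotientAddGroup.mk (algebraMap R K (qlift (x.1 ⟨num w.1, num_ne w.2⟩)))

lemma phi_spec (x : compatRing R) (w : {w : K // w ≠ 0}) {a b r : R}
    (ha : a ≠ 0) (hb : b ≠ 0) (h : w.1 * algebraMap R K b = algebraMap R K a)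
    (hr : Ideal.Quotient.mk (Ideal.span {a}) r = x.1 ⟨a, ha⟩) :
    phi x w = QuotientAddGroup.mk (algebraMap R K r) :=
  key x (num_ne w.2) (den_ne w.1) (rep_spec w.1) ha hb h (qlift_spec _) hr

lemma phi_mem (x : compatRing R) :
    (∀ w : {w : K // w ≠ 0}, ∃ r : R, phi x w = QuotientAddGroup.mk (algebraMap R K r)) ∧
    ∀ (w w' : {w : K // w ≠ 0}) (h : ∃ r : R, w'.1 = w.1 * algebraMap R K r),
      projw R K w.1 w'.1 h (phi x w') = phi x w := by
  constructor
  · exact fun w => ⟨_, rfl⟩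
  · rintro w w' ⟨c, hc⟩
    -- phi x w' = mk (alg r') with r' the chosen lift at num w'
    have hproj : projw R K w.1 w'.1 ⟨c, hc⟩ (phi x w') =
        QuotientAddGroup.mk (algebraMap R K (qlift (x.1 ⟨num w'.1, num_ne w'.2⟩))) := by
      unfold phi
      rfl
    rw [hproj]
    have hc0 : c ≠ 0 := by
      intro h0; apply w'.2; rw [hc, h0, map_zero, mul_zero]
    -- (num w', c * den w') is a representation of w
    have hrep : w.1 * algebraMap R K (c * den w'.1) = algebraMap R K (num w'.1) := by
      rw [map_mul, ← mul_assoc, ← hc, rep_spec]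
    exact (phi_spec x w (num_ne w'.2) (mul_ne_zero hc0 (den_ne w'.1)) hrep (qlift_spec _)).symm

noncomputable def Phi (x : compatRing R) : RhatK R K := ⟨phi x, phi_mem x⟩

lemma projw_mk (w w' : K) (h : ∃ r : R, w' = w * algebraMap R K r) (z : K) :
    projw R K w w' h (QuotientAddGroup.mk z) = QuotientAddGroup.mk z :=
  QuotientAddGroup.map_mk _ _ _ _ z

open Classical in
noncomputable def psifun (m : {m : R // m ≠ 0}) (q : K ⧸ Jw R K (algebraMap R K m.1)) :
    R ⧸ Ideal.span {(m : R)} :=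
  if hq : ∃ r : R, q = QuotientAddGroup.mk (algebraMap R K r) then
    Ideal.Quotient.mk _ hq.choose
  else 0

noncomputable def psi (x : RhatK R K) (m : {m : R // m ≠ 0}) : R ⧸ Ideal.span {(m : R)} :=
  psifun m (x.1 ⟨algebraMap R K m.1, alg_ne m.2⟩)

lemma psi_spec (x : RhatK R K) (m : {m : R // m ≠ 0}) {r : R}
    (hr : x.1 ⟨algebraMap R K m.1, alg_ne m.2⟩ = QuotientAddGroup.mk (algebraMap R K r)) :
    psi x m = Ideal.Quotient.mk (Ideal.span {(m : R)}) r := by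
  classical
  unfold psi psifun
  have hq : ∃ r : R, x.1 ⟨algebraMap R K m.1, alg_ne m.2⟩ =
      QuotientAddGroup.mk (algebraMap R K r) := ⟨r, hr⟩
  rw [dif_pos hq]
  -- both hq.choose and r represent the same class
  have h1 : (QuotientAddGroup.mk (algebraMap R K hq.choose) :
      K ⧸ Jw R K (algebraMap R K m.1)) = QuotientAddGroup.mk (algebraMap R K r) := by
    rw [← hq.choose_spec, hr]
  rw [QuotientAddGroup.eq, mem_Jw] at h1
  obtain ⟨c, hc⟩ := h1
  rw [Ideal.Quotient.eq, Ideal.mem_span_singleton]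
  refine ⟨-c, ?_⟩
  apply IsFractionRing.injective R K
  rw [map_sub, map_mul, map_neg]
  rw [Algebra.smul_def] at hc
  linear_combination hc

lemma psi_mem (x : RhatK R K) : psi x ∈ compatRing R := by
  intro m m' hdvd
  obtain ⟨r', hr'⟩ := x.2.1 ⟨algebraMap R K m'.1, alg_ne m'.2⟩
  rw [psi_spec x m' hr', Ideal.Quotient.factor_mk]
  apply (psi_spec x m _).symm
  obtain ⟨d, hd⟩ := hdvd
  have h : x.1 ⟨algebraMap R K m.1, alg_ne m.2⟩ =
      projw R K _ _ ⟨d, by rw [← map_mul, ← hd]⟩ (x.1 ⟨algebraMap R K m'.1, alg_ne m'.2⟩) :=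
    (x.2.2 _ _ _).symm
  rw [h, hr', projw_mk]

noncomputable def Psi (x : RhatK R K) : compatRing R := ⟨psi x, psi_mem x⟩

lemma Psi_Phi (x : compatRing R) : Psi (K := K) (Phi (K := K) x) = x := by
  apply Subtype.ext
  funext m
  show psi (Phi x) m = x.1 m
  have hrep : (algebraMap R K m.1) * algebraMap R K (1 : R) = algebraMap R K m.1 := by
    rw [map_one, mul_one]
  have hq : Ideal.Quotient.mk (Ideal.span {m.1}) (qlift (x.1 m)) = x.1 ⟨m.1, m.2⟩ :=
    qlift_spec (x.1 m)
  have h1 : (Phi x).1 ⟨algebraMap R K m.1, alg_ne m.2⟩ =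
      QuotientAddGroup.mk (algebraMap R K (qlift (x.1 m))) :=
    phi_spec x ⟨algebraMap R K m.1, alg_ne m.2⟩ m.2 (one_ne_zero : (1:R) ≠ 0) hrep hq
  rw [psi_spec (Phi x) m h1, qlift_spec]

set_option maxHeartbeats 1000000 in
lemma Phi_Psi (x : RhatK R K) : Phi (Psi x) = x := by
  apply Subtype.ext
  funext w
  show phi (Psi x) w = x.1 w
  obtain ⟨s, hs⟩ := x.2.1 ⟨algebraMap R K (num w.1), alg_ne (num_ne w.2)⟩
  have h1 : (Psi x).1 ⟨num w.1, num_ne w.2⟩ =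
      Ideal.Quotient.mk (Ideal.span {num w.1}) s := psi_spec x ⟨num w.1, num_ne w.2⟩ hs
  rw [phi_spec (Psi x) w (num_ne w.2) (den_ne w.1) (rep_spec w.1) h1.symm]
  have h2 := x.2.2 w ⟨algebraMap R K (num w.1), alg_ne (num_ne w.2)⟩
    ⟨den w.1, (rep_spec w.1).symm⟩
  rw [← h2, hs, projw_mk]

noncomputable def equivRK : RhatK R K ≃ compatRing R where
  toFun := Psi
  invFun := Phi
  left_inv := Phi_Psi
  right_inv := Psi_Phi

instance (I : Ideal R) : DiscreteTopology (R ⧸ I) := ⟨rfl⟩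
instance (w : K) : DiscreteTopology (K ⧸ Jw R K w) := ⟨rfl⟩

lemma cont_Phi : Continuous (Phi (R := R) (K := K)) := by
  apply Continuous.subtype_mk
  apply continuous_pi
  intro w
  show Continuous fun x : compatRing R => phi x w
  have h : (fun x : compatRing R => phi x w) =
      (fun q : R ⧸ Ideal.span {(num w.1 : R)} =>
        (QuotientAddGroup.mk (algebraMap R K (qlift q)) : K ⧸ Jw R K w.1)) ∘
      (fun x : compatRing R => x.1 ⟨num w.1, num_ne w.2⟩) := rfl
  rw [h]
  exact Continuous.comp continuous_of_discreteTopology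
    ((continuous_apply _).comp continuous_subtype_val)

lemma cont_Psi : Continuous (Psi (R := R) (K := K)) := by
  apply Continuous.subtype_mk
  apply continuous_pi
  intro m
  show Continuous fun x : RhatK R K => psi x m
  have h : (fun x : RhatK R K => psi x m) =
      (psifun m) ∘ (fun x : RhatK R K => x.1 ⟨algebraMap R K m.1, alg_ne m.2⟩) := rfl
  rw [h]
  exact Continuous.comp continuous_of_discreteTopology
    ((continuous_apply _).comp continuous_subtype_val)

lemma phi_add (p q : compatRing R) (w : {w : K // w ≠ 0}) :
    phi (p + q) w = phi p w + phi q w := by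
  have h1 := qlift_spec (p.1 ⟨num w.1, num_ne w.2⟩)
  have h2 := qlift_spec (q.1 ⟨num w.1, num_ne w.2⟩)
  have hr : Ideal.Quotient.mk (Ideal.span {(num w.1 : R)})
      (qlift (p.1 ⟨num w.1, num_ne w.2⟩) + qlift (q.1 ⟨num w.1, num_ne w.2⟩)) =
      (p + q).1 ⟨num w.1, num_ne w.2⟩ := by
    rw [map_add, h1, h2]; rfl
  rw [phi_spec (p + q) w (num_ne w.2) (den_ne w.1) (rep_spec w.1) hr,
      phi_spec p w (num_ne w.2) (den_ne w.1) (rep_spec w.1) h1,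
      phi_spec q w (num_ne w.2) (den_ne w.1) (rep_spec w.1) h2,
      map_add, QuotientAddGroup.mk_add]

end Stmt6Aux
end Aux


/-- For an integral domain `R` with finite quotients and
`K = Frac(R)`, the profinite completions `R̂ = lim← R/(m)` and
`R̂_K = lim← (R+(w))/(w)` are isomorphic as topological rings: `R̂_K` carries a ring
structure (whose addition is the natural componentwise one) making it isomorphic to
`R̂` via a ring isomorphism which is a homeomorphism. -/
theorem stmt6 (hfin : ∀ m : R, m ≠ 0 → Finite (R ⧸ Ideal.span {m})) :
    ∃ _i : Ring (RhatK R K),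
      (∀ x y : RhatK R K, (x + y).1 = fun w => x.1 w + y.1 w) ∧
      ∃ e : compatRing R ≃+* RhatK R K, Continuous e ∧ Continuous e.symm := by
  classical
  letI i : Ring (RhatK R K) := (Stmt6Aux.equivRK (R := R) (K := K)).ring
  refine ⟨i, ?_, ?_⟩
  · intro x y
    funext w
    have h : x + y = Stmt6Aux.Phi (Stmt6Aux.Psi x + Stmt6Aux.Psi y) := rfl
    rw [h]
    show Stmt6Aux.phi (Stmt6Aux.Psi x + Stmt6Aux.Psi y) w = x.1 w + y.1 w
    rw [Stmt6Aux.phi_add]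
    have hx : Stmt6Aux.phi (Stmt6Aux.Psi x) w = x.1 w :=
      congrFun (congrArg Subtype.val (Stmt6Aux.Phi_Psi x)) w
    have hy : Stmt6Aux.phi (Stmt6Aux.Psi y) w = y.1 w :=
      congrFun (congrArg Subtype.val (Stmt6Aux.Phi_Psi y)) w
    rw [hx, hy]
  · refine ⟨RingEquiv.symm
      { Stmt6Aux.equivRK (R := R) (K := K) with
        map_mul' := fun x y => Stmt6Aux.Psi_Phi _
        map_add' := fun x y => Stmt6Aux.Psi_Phi _ }, ?_, ?_⟩
    · exact Stmt6Aux.cont_Phi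
    · exact Stmt6Aux.cont_Psi
end

section
/- Let {ξ_r : r ∈ R} be the canonical orthonormal basis of ℓ²(R) and define operators S_m(ξ_r) = ξ_{mr} and U^n(ξ_r) = ξ_{n+r} for m ∈ R\{0} and n ∈ R, where R is an integral domain with finite quotients. Then each S_m is an isometry, each U^n is a unitary, and they satisfy: S_m S_{m'} = S_{mm'}, U^n U^{n'} = U^{n+n'}, S_m U^n = U^{mn} S_m, and Σ_{l+(m) ∈ R/(m)} U^l S_m S_m* U^{-l} = 1. -/
open Function
open scoped ENNReal ComplexConjugate

noncomputable section Aux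

namespace Stmt9Aux

variable {R : Type*}

local notation "ℓR" => lp (fun _ : R => ℂ) 2

lemma two_toReal_pos : (0:ℝ) < (2 : ℝ≥0∞).toReal := by norm_num

lemma ext_eq_extend (f : R → R) (hf : Function.Injective f) (x : ∀ _ : R, ℂ) :
    (fun y => ‖Function.extend f x 0 y‖ ^ (2 : ℝ≥0∞).toReal)
      = Function.extend f (fun r => ‖x r‖ ^ (2 : ℝ≥0∞).toReal) 0 := by
  funext y
  by_cases h : ∃ a, f a = y
  · obtain ⟨a, rfl⟩ := h
    rw [hf.extend_apply, hf.extend_apply]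
  · rw [Function.extend_apply' _ _ _ h, Function.extend_apply' _ _ _ h]
    simp only [Pi.zero_apply, norm_zero]
    rw [Real.zero_rpow (by norm_num)]

lemma memℓp_extend (f : R → R) (hf : Function.Injective f) (x : ℓR) :
    Memℓp (Function.extend f (⇑x) 0) 2 := by
  apply memℓp_gen
  have hx : Summable fun r => ‖x r‖ ^ (2 : ℝ≥0∞).toReal :=
    (memℓp_gen_iff two_toReal_pos).1 (lp.memℓp x)
  rw [ext_eq_extend f hf]
  exact (summable_extend_zero hf).2 hx

/-- The linear isometry induced by an injective self-map of the index set. -/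
noncomputable def TeI (f : R → R) (hf : Function.Injective f) : ℓR →ₗᵢ[ℂ] ℓR where
  toFun := fun x => ⟨Function.extend f (⇑x) 0, memℓp_extend f hf x⟩
  map_add' := by
    intro x y
    apply lp.ext
    funext z
    have : (⇑(x + y) : ∀ _ : R, ℂ) = ⇑x + ⇑y := lp.coeFn_add x y
    show Function.extend f (⇑(x+y)) 0 z = Function.extend f (⇑x) 0 z + Function.extend f (⇑y) 0 z
    rw [this]
    by_cases h : ∃ a, f a = z
    · obtain ⟨a, rfl⟩ := h
      rw [hf.extend_apply, hf.extend_apply, hf.extend_apply]; rfl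
    · rw [Function.extend_apply' _ _ _ h, Function.extend_apply' _ _ _ h,
        Function.extend_apply' _ _ _ h]
      simp
  map_smul' := by
    intro c x
    apply lp.ext
    funext z
    have : (⇑(c • x) : ∀ _ : R, ℂ) = c • ⇑x := lp.coeFn_smul c x
    show Function.extend f (⇑(c • x)) 0 z = c • Function.extend f (⇑x) 0 z
    rw [this]
    by_cases h : ∃ a, f a = z
    · obtain ⟨a, rfl⟩ := h
      rw [hf.extend_apply, hf.extend_apply]; rfl
    · rw [Function.extend_apply' _ _ _ h, Function.extend_apply' _ _ _ h]
      simp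
  norm_map' := by
    intro x
    have h1 : HasSum (fun y => ‖Function.extend f (⇑x) 0 y‖ ^ (2 : ℝ≥0∞).toReal)
        (‖x‖ ^ (2 : ℝ≥0∞).toReal) := by
      rw [ext_eq_extend f hf]
      exact (hasSum_extend_zero hf).2 (lp.hasSum_norm two_toReal_pos x)
    have h2 := lp.hasSum_norm two_toReal_pos
      (⟨Function.extend f (⇑x) 0, memℓp_extend f hf x⟩ : ℓR)
    have h3 := h1.unique h2
    have := Real.rpow_left_injOn (x := (2 : ℝ≥0∞).toReal) (by norm_num)
    exact this (by simp [norm_nonneg]) (by simp [norm_nonneg]) h3.symm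

noncomputable def Te (f : R → R) (hf : Function.Injective f) : ℓR →L[ℂ] ℓR :=
  (TeI f hf).toContinuousLinearMap

@[simp] lemma Te_apply (f : R → R) (hf : Function.Injective f) (x : ℓR) (z : R) :
    (Te f hf x) z = Function.extend f (⇑x) 0 z := rfl

lemma Te_single [DecidableEq R] (f : R → R) (hf : Function.Injective f) (r : R) :
    Te f hf (lp.single 2 r (1:ℂ)) = lp.single 2 (f r) (1:ℂ) := by
  apply lp.ext
  funext z
  show Function.extend f (⇑(lp.single 2 r (1:ℂ))) 0 z = _
  by_cases h : ∃ a, f a = z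
  · obtain ⟨a, rfl⟩ := h
    rw [hf.extend_apply]
    rw [lp.single_apply, lp.single_apply]
    by_cases ha : a = r
    · subst ha; simp
    · rw [Pi.single_apply, Pi.single_apply, if_neg ha, if_neg (fun hc => ha (hf hc))]
  · rw [Function.extend_apply' _ _ _ h]
    rw [lp.single_apply, Pi.single_apply, if_neg (fun hc : z = f r => h ⟨r, hc.symm⟩)]
    rfl

lemma coord_eq_inner [DecidableEq R] (z : ℓR) (r : R) :
    z r = @inner ℂ _ _ (lp.single 2 r (1:ℂ)) z := by
  rw [lp.inner_single_left]
  simp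

lemma memℓp_comp (f : R → R) (hf : Function.Injective f) (x : ℓR) :
    Memℓp (fun r => x (f r)) 2 := by
  apply memℓp_gen
  have hx : Summable fun r => ‖x r‖ ^ (2 : ℝ≥0∞).toReal :=
    (memℓp_gen_iff two_toReal_pos).1 (lp.memℓp x)
  exact hx.comp_injective hf

lemma adjoint_Te_apply [DecidableEq R] (f : R → R) (hf : Function.Injective f) (x : ℓR) :
    ContinuousLinearMap.adjoint (Te f hf) x = ⟨fun r => x (f r), memℓp_comp f hf x⟩ := by
  apply lp.ext
  funext r
  show (ContinuousLinearMap.adjoint (Te f hf) x) r = x (f r)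
  rw [coord_eq_inner, ContinuousLinearMap.adjoint_inner_right, Te_single f hf r,
    lp.inner_single_left]
  simp

lemma adjoint_Te_apply' [DecidableEq R] (f : R → R) (hf : Function.Injective f) (x : ℓR) (r : R) :
    (ContinuousLinearMap.adjoint (Te f hf) x) r = x (f r) := by
  rw [adjoint_Te_apply]

lemma Te_comp (f g : R → R) (hf : Function.Injective f) (hg : Function.Injective g) :
    Te f hf * Te g hg = Te (f ∘ g) (hf.comp hg) := by
  ext x z
  show Function.extend f (Function.extend g (⇑x) 0) 0 z = Function.extend (f ∘ g) (⇑x) 0 z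
  by_cases h : ∃ a, (f ∘ g) a = z
  · obtain ⟨a, rfl⟩ := h
    rw [(hf.comp hg).extend_apply]
    show Function.extend f (Function.extend g (⇑x) 0) 0 (f (g a)) = _
    rw [hf.extend_apply, hg.extend_apply]
  · rw [Function.extend_apply' _ _ _ h]
    by_cases h2 : ∃ b, f b = z
    · obtain ⟨b, rfl⟩ := h2
      rw [hf.extend_apply]
      rw [Function.extend_apply' _ _ _ (fun ⟨a, ha⟩ => h ⟨a, by simp [ha]⟩)]
      rfl
    · rw [Function.extend_apply' _ _ _ h2]

lemma Te_congr (f g : R → R) (hf : Function.Injective f) (h : f = g) :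
    Te f hf = Te g (h ▸ hf) := by subst h; rfl

lemma Te_id : Te (id : R → R) Function.injective_id = 1 := by
  ext x z
  show Function.extend id (⇑x) 0 z = x z
  exact Function.injective_id.extend_apply (⇑x) 0 z

lemma Te_eq (f g : R → R) (hf : Function.Injective f) (hg : Function.Injective g)
    (h : ∀ r, f r = g r) : Te f hf = Te g hg := by
  have hfg : f = g := funext h
  subst hfg
  rfl

lemma U_apply [AddGroup R] (n : R) (x : ℓR) (z : R) :
    (Te (fun r => n + r) (add_right_injective n) x) z = x (-n + z) := by
  have hz : z = n + (-n + z) := by rw [add_neg_cancel_left]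
  conv_lhs => rw [Te_apply, hz, (add_right_injective n).extend_apply]

end Stmt9Aux

open Stmt9Aux in

/-- On `ℓ²(R)` (with canonical orthonormal basis `ξ_r = lp.single 2 r 1`)
there exist bounded operators `S_m` (`m ≠ 0`) and `U^n` determined by
`S_m ξ_r = ξ_{mr}` and `U^n ξ_r = ξ_{n+r}`; each `S_m` is an isometry, each `U^n` is a
unitary, and they satisfy (CL1)–(CL4). -/
theorem stmt9 (R : Type*) [CommRing R] [IsDomain R] [DecidableEq R]
    (hfin : ∀ m : R, m ≠ 0 → Finite (R ⧸ Ideal.span {m})) :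
    ∃ S : {m : R // m ≠ 0} → (lp (fun _ : R => ℂ) 2 →L[ℂ] lp (fun _ : R => ℂ) 2),
    ∃ U : R → (lp (fun _ : R => ℂ) 2 →L[ℂ] lp (fun _ : R => ℂ) 2),
      (∀ (m : {m : R // m ≠ 0}) (r : R),
        S m (lp.single 2 r (1 : ℂ)) = lp.single 2 ((m : R) * r) (1 : ℂ)) ∧
      (∀ (n r : R), U n (lp.single 2 r (1 : ℂ)) = lp.single 2 (n + r) (1 : ℂ)) ∧
      -- each `S_m` is an isometry
      (∀ m : {m : R // m ≠ 0}, ContinuousLinearMap.adjoint (S m) * S m = 1) ∧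
      -- each `U^n` is a unitary
      (∀ n : R, ContinuousLinearMap.adjoint (U n) * U n = 1 ∧
        U n * ContinuousLinearMap.adjoint (U n) = 1) ∧
      -- (CL1)
      (∀ m m' : {m : R // m ≠ 0}, S m * S m' = S ⟨m * m', mul_ne_zero m.2 m'.2⟩) ∧
      -- (CL2)
      (∀ n n' : R, U n * U n' = U (n + n')) ∧
      -- (CL3)
      (∀ (m : {m : R // m ≠ 0}) (n : R), S m * U n = U ((m : R) * n) * S m) ∧
      -- (CL4)
      (∀ (m : {m : R // m ≠ 0}) (T : Finset R),
        (∀ c : R ⧸ Ideal.span {(m : R)},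
          ∃! l : R, l ∈ T ∧ Ideal.Quotient.mk (Ideal.span {(m : R)}) l = c) →
        ∑ l ∈ T, U l * S m * ContinuousLinearMap.adjoint (S m) * U (-l) = 1) := by
  classical
  refine ⟨fun m => Te (fun r => (m : R) * r) (mul_right_injective₀ m.2),
    fun n => Te (fun r => n + r) (add_right_injective n), ?_, ?_, ?_, ?_, ?_, ?_, ?_, ?_⟩
  · intro m r
    exact Te_single _ _ r
  · intro n r
    exact Te_single _ _ r
  · -- isometry
    intro m
    ext x z
    rw [ContinuousLinearMap.mul_apply, adjoint_Te_apply', Te_apply,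
      (mul_right_injective₀ m.2).extend_apply, ContinuousLinearMap.one_apply]
  · -- unitary
    intro n
    have hadj : ContinuousLinearMap.adjoint (Te (fun r => n + r) (add_right_injective n))
        = Te (fun r => -n + r) (add_right_injective (-n)) := by
      ext x z
      rw [adjoint_Te_apply', U_apply, neg_neg]
    constructor
    · ext x z
      rw [ContinuousLinearMap.mul_apply, adjoint_Te_apply', Te_apply,
        (add_right_injective n).extend_apply, ContinuousLinearMap.one_apply]
    · rw [hadj, Te_comp]
      rw [Te_eq _ id _ Function.injective_id (fun r => by simp)]
      exact Te_id
  · -- CL1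
    intro m m'
    rw [Te_comp]
    exact Te_eq _ _ _ _ (fun r => by show (m:R) * ((m':R) * r) = _; ring)
  · -- CL2
    intro n n'
    rw [Te_comp]
    exact Te_eq _ _ _ _ (fun r => by show n + (n' + r) = _; ring)
  · -- CL3
    intro m n
    rw [Te_comp, Te_comp]
    exact Te_eq _ _ _ _ (fun r => by show (m:R) * (n + r) = (m:R) * n + ((m:R) * r); ring)
  · -- CL4
    intro m T hT
    have hterm : ∀ (l z : R) (x : lp (fun _ : R => ℂ) 2),
        ((Te (fun r => l + r) (add_right_injective l) *
          Te (fun r => (m : R) * r) (mul_right_injective₀ m.2) *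
          ContinuousLinearMap.adjoint (Te (fun r => (m : R) * r) (mul_right_injective₀ m.2)) *
          Te (fun r => -l + r) (add_right_injective (-l))) x) z
          = if (m : R) ∣ z - l then x z else 0 := by
      intro l z x
      rw [ContinuousLinearMap.mul_apply, ContinuousLinearMap.mul_apply,
        ContinuousLinearMap.mul_apply, U_apply, Te_apply]
      by_cases hd : (m : R) ∣ z - l
      · obtain ⟨c, hc⟩ := hd
        have h1 : -l + z = (m : R) * c := by rw [← hc]; ring
        rw [h1, (mul_right_injective₀ m.2).extend_apply, adjoint_Te_apply', U_apply]
        have h2 : - -l + (m : R) * c = z := by rw [← hc]; ring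
        rw [h2, if_pos ⟨c, hc⟩]
      · rw [Function.extend_apply' _ _ _ (fun ⟨c, hcc⟩ => hd ⟨c, by rw [hcc]; ring⟩),
          if_neg hd]
        rfl
    ext x z
    rw [ContinuousLinearMap.sum_apply, ContinuousLinearMap.one_apply]
    have hcoe : (↑(∑ l ∈ T, (Te (fun r => l + r) (add_right_injective l) *
          Te (fun r => (m : R) * r) (mul_right_injective₀ m.2) *
          ContinuousLinearMap.adjoint (Te (fun r => (m : R) * r) (mul_right_injective₀ m.2)) *
          Te (fun r => -l + r) (add_right_injective (-l))) x) : ∀ _ : R, ℂ) z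
        = ∑ l ∈ T, ((Te (fun r => l + r) (add_right_injective l) *
          Te (fun r => (m : R) * r) (mul_right_injective₀ m.2) *
          ContinuousLinearMap.adjoint (Te (fun r => (m : R) * r) (mul_right_injective₀ m.2)) *
          Te (fun r => -l + r) (add_right_injective (-l))) x) z := by
      rw [lp.coeFn_sum, Finset.sum_apply]
    rw [hcoe]
    have hrw : ∀ l ∈ T, ((Te (fun r => l + r) (add_right_injective l) *
          Te (fun r => (m : R) * r) (mul_right_injective₀ m.2) *
          ContinuousLinearMap.adjoint (Te (fun r => (m : R) * r) (mul_right_injective₀ m.2)) *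
          Te (fun r => -l + r) (add_right_injective (-l))) x) z
          = if (m : R) ∣ z - l then x z else 0 := fun l _ => hterm l z x
    rw [Finset.sum_congr rfl hrw]
    obtain ⟨l₀, ⟨hl₀T, hmk⟩, huniq⟩ := hT (Ideal.Quotient.mk (Ideal.span {(m : R)}) z)
    have hdvd_iff : ∀ l : R, (m : R) ∣ z - l ↔
        Ideal.Quotient.mk (Ideal.span {(m : R)}) l
          = Ideal.Quotient.mk (Ideal.span {(m : R)}) z := by
      intro l
      rw [Ideal.Quotient.eq, Ideal.mem_span_singleton, dvd_sub_comm]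
    rw [Finset.sum_eq_single_of_mem l₀ hl₀T]
    · rw [if_pos ((hdvd_iff l₀).2 hmk)]
    · intro l hl hne
      rw [if_neg (fun hd => hne (huniq l ⟨hl, (hdvd_iff l).1 hd⟩))]
end Aux
end

section
/- Let R be an integral domain with finite quotients and K = Frac(R). In the universal C*-algebra A[R] (with generators u^n, s_m satisfying (CL1)–(CL4)), the map π : K ⋊ K× → A[R] given by π(n/m', m/m') = s_{m'}* u^n s_m (for n ∈ R, m, m' ∈ R\{0}) is well-defined, i.e., independent of the chosen representation: if n/m' = q/p' and m/m' = p/p' with n,q ∈ R and m,m',p,p' ∈ R\{0}, then s_{m'}* u^n s_m = s_{p'}* u^q s_p. -/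
/-- In the Cuntz–Li algebra `A[R]` — modelled faithfully by an
arbitrary unital C*-algebra with isometries `s m`, unitaries `u n` satisfying
(CL1)–(CL4) — the assignment `π(n/m', m/m') = s_{m'}* u^n s_m` does not depend on the
chosen representation: if `n/m' = q/p'` and `m/m' = p/p'` in the field of fractions
`K`, then `s_{m'}* u^n s_m = s_{p'}* u^q s_p`. -/
theorem stmt13 (R : Type*) [CommRing R] [IsDomain R]
    (K : Type*) [Field K] [Algebra R K] [IsFractionRing R K]
    (hfin : ∀ m : R, m ≠ 0 → Finite (R ⧸ Ideal.span {m}))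
    (A : Type*) [CStarAlgebra A] (s u : R → A)
    (hiso : ∀ m : R, m ≠ 0 → star (s m) * s m = 1)
    (huni : ∀ n : R, u n * star (u n) = 1 ∧ star (u n) * u n = 1)
    (hCL1 : ∀ m m' : R, m ≠ 0 → m' ≠ 0 → s m * s m' = s (m * m'))
    (hCL2 : ∀ n n' : R, u n * u n' = u (n + n'))
    (hCL3 : ∀ m n : R, m ≠ 0 → s m * u n = u (m * n) * s m)
    (hCL4 : ∀ m : R, m ≠ 0 → ∀ T : Finset R,
      (∀ c : R ⧸ Ideal.span {m}, ∃! l : R, l ∈ T ∧ Ideal.Quotient.mk (Ideal.span {m}) l = c) →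
      ∑ l ∈ T, u l * s m * star (s m) * u (-l) = 1)
    (n q : R) (m m' p p' : R) (hm : m ≠ 0) (hm' : m' ≠ 0) (hp : p ≠ 0) (hp' : p' ≠ 0)
    (h1 : algebraMap R K n / algebraMap R K m' = algebraMap R K q / algebraMap R K p')
    (h2 : algebraMap R K m / algebraMap R K m' = algebraMap R K p / algebraMap R K p') :
    star (s m') * u n * s m = star (s p') * u q * s p := by
  have inj := IsFractionRing.injective R K
  have hm'K : algebraMap R K m' ≠ 0 := fun h => hm' (inj (by simpa using h))
  have hp'K : algebraMap R K p' ≠ 0 := fun h => hp' (inj (by simpa using h))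
  rw [div_eq_div_iff hm'K hp'K] at h1 h2
  have e1 : p' * n = m' * q := by
    apply inj; simp only [map_mul]
    rw [mul_comm (algebraMap R K p'), h1, mul_comm]
  have e2 : p' * m = m' * p := by
    apply inj; simp only [map_mul]
    rw [mul_comm (algebraMap R K p'), h2, mul_comm]
  have key : ∀ (a N M M' : R), a ≠ 0 → M ≠ 0 → M' ≠ 0 →
      star (s (a * M')) * u (a * N) * s (a * M) = star (s M') * u N * s M := by
    intro a N M M' ha hM hM'
    rw [← hCL1 a M' ha hM', ← hCL1 a M ha hM, star_mul]
    have h3 : u (a * N) * s a = s a * u N := (hCL3 a N ha).symm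
    calc star (s M') * star (s a) * u (a * N) * (s a * s M)
        = star (s M') * (star (s a) * (u (a * N) * s a)) * s M := by
          simp only [mul_assoc]
      _ = star (s M') * (star (s a) * s a * u N) * s M := by rw [h3]; simp only [mul_assoc]
      _ = star (s M') * u N * s M := by rw [hiso a ha, one_mul]
  calc star (s m') * u n * s m
      = star (s (p' * m')) * u (p' * n) * s (p' * m) := (key p' n m m' hp' hm hm').symm
    _ = star (s (m' * p')) * u (m' * q) * s (m' * p) := by rw [e1, e2, mul_comm p' m']
    _ = star (s p') * u q * s p := key m' q p p' hm' hp hp'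
end

section
/- With R, K, A[R] as above, the map π : K ⋊ K× → A[R], π(n/m', m/m') = s_{m'}* u^n s_m, is a partial representation: π(0,1) = 1, π(g⁻¹) = π(g)*, and π(g)π(h)π(h⁻¹) = π(gh)π(h⁻¹) for all g, h ∈ K ⋊ K×. -/
section Stmt14Aux
variable {R : Type*} [CommRing R]
variable {A : Type*} [CStarAlgebra A]

lemma stmt14_star_eq_zero (a : A) (h : star a * a = 0) : a = 0 := by
  have h1 := CStarRing.norm_star_mul_self (x := a)
  have h2 : ‖a‖ * ‖a‖ = 0 := by rw [← h1, h, norm_zero]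
  have h3 : ‖a‖ = 0 := by nlinarith [norm_nonneg a]
  exact norm_eq_zero.mp h3

lemma stmt14_u_zero (u : R → A)
    (huni : ∀ n : R, u n * star (u n) = 1 ∧ star (u n) * u n = 1)
    (hCL2 : ∀ n n' : R, u n * u n' = u (n + n')) : u (0 : R) = 1 := by
  have h : u (0:R) * u 0 = u 0 := by rw [hCL2, add_zero]
  calc u (0:R) = star (u (0:R)) * u 0 * u 0 := by rw [(huni 0).2, one_mul]
    _ = star (u (0:R)) * (u 0 * u 0) := by rw [mul_assoc]
    _ = star (u (0:R)) * u 0 := by rw [h]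
    _ = 1 := (huni 0).2

lemma stmt14_u_star (u : R → A)
    (huni : ∀ n : R, u n * star (u n) = 1 ∧ star (u n) * u n = 1)
    (hCL2 : ∀ n n' : R, u n * u n' = u (n + n')) (n : R) : star (u n) = u (-n) := by
  have h1 : u n * u (-n) = 1 := by rw [hCL2, add_neg_cancel, stmt14_u_zero u huni hCL2]
  calc star (u n) = star (u n) * (u n * u (-n)) := by rw [h1, mul_one]
    _ = star (u n) * u n * u (-n) := by rw [mul_assoc]
    _ = u (-n) := by rw [(huni n).2, one_mul]

lemma stmt14_sstar_u (s u : R → A)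
    (huni : ∀ n : R, u n * star (u n) = 1 ∧ star (u n) * u n = 1)
    (hCL2 : ∀ n n' : R, u n * u n' = u (n + n'))
    (hCL3 : ∀ m n : R, m ≠ 0 → s m * u n = u (m * n) * s m)
    (m k : R) (hm : m ≠ 0) :
    star (s m) * u (m * k) = u k * star (s m) := by
  have h := congrArg star (hCL3 m (-k) hm)
  simp only [star_mul, stmt14_u_star u huni hCL2, neg_neg, mul_neg] at h
  exact h.symm

lemma stmt14_transversal {R : Type*} [CommRing R] (m : R)
    (hfin : Finite (R ⧸ Ideal.span {m})) (x y : R)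
    (hxy : Ideal.Quotient.mk (Ideal.span {m}) x ≠ Ideal.Quotient.mk (Ideal.span {m}) y) :
    ∃ T : Finset R, x ∈ T ∧ y ∈ T ∧
      ∀ c : R ⧸ Ideal.span {m}, ∃! l : R, l ∈ T ∧ Ideal.Quotient.mk (Ideal.span {m}) l = c := by
  classical
  haveI := Fintype.ofFinite (R ⧸ Ideal.span {m})
  let mk : R → R ⧸ Ideal.span {m} := fun a => Ideal.Quotient.mk (Ideal.span {m}) a
  have hsurj : Function.Surjective mk := Ideal.Quotient.mk_surjective
  let f : (R ⧸ Ideal.span {m}) → R := fun c =>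
    if c = mk x then x else if c = mk y then y else (hsurj c).choose
  have hf : ∀ c, mk (f c) = c := by
    intro c
    by_cases h1 : c = mk x
    · simp only [f, if_pos h1]; exact h1.symm
    · by_cases h2 : c = mk y
      · simp only [f, if_neg h1, if_pos h2]; exact h2.symm
      · simp only [f, if_neg h1, if_neg h2]; exact (hsurj c).choose_spec
  have hfx : f (mk x) = x := by simp only [f, if_pos rfl]
  have hfy : f (mk y) = y := by
    have hne : mk y ≠ mk x := Ne.symm hxy
    simp [f, hne]
  refine ⟨Finset.univ.image f, ?_, ?_, ?_⟩
  · exact Finset.mem_image.mpr ⟨mk x, Finset.mem_univ _, hfx⟩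
  · exact Finset.mem_image.mpr ⟨mk y, Finset.mem_univ _, hfy⟩
  · intro c
    refine ⟨f c, ⟨Finset.mem_image.mpr ⟨c, Finset.mem_univ _, rfl⟩, hf c⟩, ?_⟩
    rintro l ⟨hl, rfl⟩
    obtain ⟨c', -, rfl⟩ := Finset.mem_image.mp hl
    exact (congrArg f (hf c')).symm

lemma stmt14_transversal' {R : Type*} [CommRing R] (m : R)
    (hfin : Finite (R ⧸ Ideal.span {m})) :
    ∃ T : Finset R,
      ∀ c : R ⧸ Ideal.span {m}, ∃! l : R, l ∈ T ∧ Ideal.Quotient.mk (Ideal.span {m}) l = c := by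
  classical
  haveI := Fintype.ofFinite (R ⧸ Ideal.span {m})
  let mk : R → R ⧸ Ideal.span {m} := fun a => Ideal.Quotient.mk (Ideal.span {m}) a
  have hsurj : Function.Surjective mk := Ideal.Quotient.mk_surjective
  let f : (R ⧸ Ideal.span {m}) → R := fun c => (hsurj c).choose
  have hf : ∀ c, mk (f c) = c := fun c => (hsurj c).choose_spec
  refine ⟨Finset.univ.image f, ?_⟩
  intro c
  refine ⟨f c, ⟨Finset.mem_image.mpr ⟨c, Finset.mem_univ _, rfl⟩, hf c⟩, ?_⟩
  rintro l ⟨hl, rfl⟩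
  obtain ⟨c', -, rfl⟩ := Finset.mem_image.mp hl
  exact (congrArg f (hf c')).symm

end Stmt14Aux

section Stmt14Orth
variable {R : Type*} [CommRing R] [IsDomain R]
variable {A : Type*} [CStarAlgebra A]

lemma stmt14_orth (s u : R → A)
    (hfin : ∀ m : R, m ≠ 0 → Finite (R ⧸ Ideal.span {m}))
    (hiso : ∀ m : R, m ≠ 0 → star (s m) * s m = 1)
    (huni : ∀ n : R, u n * star (u n) = 1 ∧ star (u n) * u n = 1)
    (hCL2 : ∀ n n' : R, u n * u n' = u (n + n'))
    (hCL4 : ∀ m : R, m ≠ 0 → ∀ T : Finset R,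
      (∀ c : R ⧸ Ideal.span {m}, ∃! l : R, l ∈ T ∧ Ideal.Quotient.mk (Ideal.span {m}) l = c) →
      ∑ l ∈ T, u l * s m * star (s m) * u (-l) = 1)
    (m : R) (hm : m ≠ 0) (k : R) (hk : ¬ m ∣ k) :
    star (s m) * (u k * s m) = 0 := by
  classical
  letI := CStarAlgebra.spectralOrder A
  haveI := CStarAlgebra.spectralOrderedRing A
  have hu0 : u (0:R) = 1 := stmt14_u_zero u huni hCL2
  have hus : ∀ n : R, star (u n) = u (-n) := stmt14_u_star u huni hCL2
  have hmk : Ideal.Quotient.mk (Ideal.span {m}) k ≠ Ideal.Quotient.mk (Ideal.span {m}) (0:R) := by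
    intro h
    apply hk
    have h2 := Ideal.Quotient.eq.mp h
    rw [sub_zero] at h2
    exact Ideal.mem_span_singleton.mp h2
  obtain ⟨T, hkT, h0T, htrans⟩ := stmt14_transversal m (hfin m hm) k 0 hmk
  have hsum : ∑ l ∈ T, u l * s m * star (s m) * u (-l) = 1 := hCL4 m hm T htrans
  let r : R → A := fun l => star (s m) * u (-l)
  let P : R → A := fun l => u l * s m * star (s m) * u (-l)
  have hPr : ∀ l, P l = star (r l) * r l := by
    intro l
    simp only [P, r, star_mul, star_star, hus, neg_neg, mul_assoc]
  have hrr : ∀ l, r l * star (r l) = 1 := by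
    intro l
    simp only [r, star_mul, star_star, hus, neg_neg]
    have h1 : u (-l) * (u l * s m) = s m := by
      rw [← mul_assoc, hCL2, neg_add_cancel, hu0, one_mul]
    rw [mul_assoc, h1, hiso m hm]
  have hPsa : ∀ l, star (P l) = P l := by
    intro l
    rw [hPr, star_mul, star_star]
  have hproj : ∀ l, P l * P l = P l := by
    intro l
    rw [hPr]
    calc star (r l) * r l * (star (r l) * r l) = star (r l) * ((r l * star (r l)) * r l) := by
          simp only [mul_assoc]
      _ = star (r l) * r l := by rw [hrr, one_mul]
  have hsum' : ∑ l ∈ T, P l = 1 := hsum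
  -- orthogonality
  have hort : ∀ l ∈ T, ∀ l' ∈ T, l ≠ l' → P l * P l' = 0 := by
    intro l hl l' hl' hne
    have hsum2 : ∑ x ∈ T, P l' * P x * P l' = P l' := by
      calc ∑ x ∈ T, P l' * P x * P l' = (∑ x ∈ T, P l' * P x) * P l' := by
            rw [Finset.sum_mul]
        _ = (P l' * ∑ x ∈ T, P x) * P l' := by rw [Finset.mul_sum]
        _ = P l' := by rw [hsum', mul_one, hproj]
    have herase : ∑ x ∈ T.erase l', P l' * P x * P l' = 0 := by
      have h2 := Finset.add_sum_erase T (fun x => P l' * P x * P l') hl'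
      rw [hsum2] at h2
      have h3 : P l' * P l' * P l' = P l' := by rw [hproj, hproj]
      rw [h3] at h2
      exact add_left_cancel (h2.trans (add_zero (P l')).symm)
    have hform : ∀ x, star (r x * P l') * (r x * P l') = P l' * P x * P l' := by
      intro x
      rw [star_mul, hPsa, hPr x]
      simp only [mul_assoc]
    have hnonneg : ∀ x ∈ T.erase l', 0 ≤ P l' * P x * P l' := by
      intro x _
      rw [← hform]
      exact star_mul_self_nonneg _
    have hzero : P l' * P l * P l' = 0 :=
      (Finset.sum_eq_zero_iff_of_nonneg hnonneg).mp herase l (Finset.mem_erase.mpr ⟨hne, hl⟩)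
    have hrP : r l * P l' = 0 := by
      apply stmt14_star_eq_zero
      rw [hform, hzero]
    calc P l * P l' = star (r l) * r l * P l' := by rw [hPr]
      _ = star (r l) * (r l * P l') := by rw [mul_assoc]
      _ = 0 := by rw [hrP, mul_zero]
  have hk0 : (0:R) ≠ k := by
    intro h
    exact hmk (by rw [← h])
  have h0k : P 0 * P k = 0 := hort 0 h0T k hkT hk0
  -- extract
  have hext : r 0 * (P 0 * P k) * star (r k) = 0 := by rw [h0k, mul_zero, zero_mul]
  have hval : r 0 * (P 0 * P k) * star (r k) = star (s m) * (u k * s m) := by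
    rw [hPr, hPr]
    calc r 0 * (star (r 0) * r 0 * (star (r k) * r k)) * star (r k)
        = (r 0 * star (r 0)) * (r 0 * star (r k)) * (r k * star (r k)) := by
          simp only [mul_assoc]
      _ = r 0 * star (r k) := by rw [hrr, hrr, one_mul, mul_one]
      _ = star (s m) * u (-0) * (u k * s m) := by
          simp only [r, star_mul, star_star, hus, neg_neg, mul_assoc]
      _ = star (s m) * (u k * s m) := by rw [neg_zero, hu0, mul_one]
  rw [← hval, hext]

lemma stmt14_commute (s u : R → A)
    (hfin : ∀ m : R, m ≠ 0 → Finite (R ⧸ Ideal.span {m}))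
    (hiso : ∀ m : R, m ≠ 0 → star (s m) * s m = 1)
    (huni : ∀ n : R, u n * star (u n) = 1 ∧ star (u n) * u n = 1)
    (hCL1 : ∀ m m' : R, m ≠ 0 → m' ≠ 0 → s m * s m' = s (m * m'))
    (hCL2 : ∀ n n' : R, u n * u n' = u (n + n'))
    (hCL3 : ∀ m n : R, m ≠ 0 → s m * u n = u (m * n) * s m)
    (hCL4 : ∀ m : R, m ≠ 0 → ∀ T : Finset R,
      (∀ c : R ⧸ Ideal.span {m}, ∃! l : R, l ∈ T ∧ Ideal.Quotient.mk (Ideal.span {m}) l = c) →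
      ∑ l ∈ T, u l * s m * star (s m) * u (-l) = 1)
    (d m n : R) (hd : d ≠ 0) (hm : m ≠ 0) :
    (s d * star (s d)) * (u n * (s m * (star (s m) * u (-n)))) =
      (u n * (s m * (star (s m) * u (-n)))) * (s d * star (s d)) := by
  have hu0 : u (0:R) = 1 := stmt14_u_zero u huni hCL2
  have hus : ∀ x : R, star (u x) = u (-x) := stmt14_u_star u huni hCL2
  have hssu : ∀ (a k : R), a ≠ 0 → star (s a) * u (a * k) = u k * star (s a) :=
    fun a k ha => stmt14_sstar_u s u huni hCL2 hCL3 a k ha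
  have hdm : d * m ≠ 0 := mul_ne_zero hd hm
  obtain ⟨T, htrans⟩ := stmt14_transversal' (d * m) (hfin _ hdm)
  have hsum : ∑ l ∈ T, u l * s (d * m) * star (s (d * m)) * u (-l) = 1 := hCL4 _ hdm T htrans
  let Q : R → A := fun l => u l * s (d * m) * star (s (d * m)) * u (-l)
  have hsum' : ∑ l ∈ T, Q l = 1 := hsum
  set e : A := s d * star (s d) with he
  set f : A := u n * (s m * (star (s m) * u (-n))) with hf
  have hesa : star e = e := by rw [he, star_mul, star_star]
  have hQsa : ∀ l, star (Q l) = Q l := by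
    intro l
    simp only [Q, star_mul, star_star, hus, neg_neg, mul_assoc]
  have hfsa : star f = f := by
    rw [hf]
    simp only [star_mul, star_star, hus, neg_neg, mul_assoc]
  -- splitting of s (d*m)
  have hs1 : s (d * m) = s d * s m := hCL1 d m hd hm |>.symm
  have hs2 : s (d * m) = s m * s d := by rw [hCL1 m d hm hd, mul_comm m d]
  -- e commutes with each Q l
  have heQ : ∀ l, e * Q l = Q l * e := by
    intro l
    by_cases hdl : d ∣ l
    · obtain ⟨j, rfl⟩ := hdl
      have h1 : e * Q (d * j) = Q (d * j) := by
        show (s d * star (s d)) * (u (d * j) * s (d * m) * star (s (d * m)) * u (-(d * j))) =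
          u (d * j) * s (d * m) * star (s (d * m)) * u (-(d * j))
        rw [hs1]
        simp only [mul_assoc]
        rw [← mul_assoc (star (s d)) (u (d * j)), hssu d j hd]
        rw [mul_assoc (u j)]
        rw [← mul_assoc (star (s d)) (s d), hiso d hd, one_mul]
        rw [← mul_assoc (s d) (u j), hCL3 d j hd]
        simp only [mul_assoc]
      have h2 : Q (d * j) * e = Q (d * j) := by
        have h3 := congrArg star h1
        rwa [star_mul, hesa, hQsa] at h3
      rw [h1, h2]
    · have horth : star (s d) * (u l * s d) = 0 :=
        stmt14_orth s u hfin hiso huni hCL2 hCL4 d hd l hdl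
      have h1 : e * Q l = 0 := by
        show (s d * star (s d)) * (u l * s (d * m) * star (s (d * m)) * u (-l)) = 0
        rw [hs1]
        simp only [mul_assoc]
        have h0 : star (s d) * (u l * (s d * (s m * (star (s d * s m) * u (-l))))) = 0 := by
          calc star (s d) * (u l * (s d * (s m * (star (s d * s m) * u (-l)))))
              = (star (s d) * (u l * s d)) * (s m * (star (s d * s m) * u (-l))) := by
                simp only [mul_assoc]
            _ = 0 := by rw [horth, zero_mul]
        rw [h0, mul_zero]
      have h2 : Q l * e = 0 := by
        have h3 := congrArg star h1
        rwa [star_mul, hesa, hQsa, star_zero] at h3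
      rw [h1, h2]
  -- f * Q l is Q l or 0
  have hfQ : ∀ l, f * Q l = Q l ∨ f * Q l = 0 := by
    intro l
    by_cases hml : m ∣ (-n + l)
    · left
      obtain ⟨j, hj⟩ := hml
      show (u n * (s m * (star (s m) * u (-n)))) * (u l * s (d * m) * star (s (d * m)) * u (-l)) =
        u l * s (d * m) * star (s (d * m)) * u (-l)
      rw [hs2]
      simp only [mul_assoc]
      rw [← mul_assoc (u (-n)) (u l), hCL2, hj]
      rw [← mul_assoc (star (s m)) (u (m * j)), hssu m j hm]
      rw [mul_assoc (u j)]
      rw [← mul_assoc (star (s m)) (s m), hiso m hm, one_mul]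
      rw [← mul_assoc (s m) (u j), hCL3 m j hm]
      simp only [mul_assoc]
      rw [← mul_assoc (u n) (u (m * j)), hCL2]
      have hnl : n + m * j = l := by rw [← hj]; ring
      rw [hnl]
    · right
      have horth : star (s m) * (u (-n + l) * s m) = 0 :=
        stmt14_orth s u hfin hiso huni hCL2 hCL4 m hm (-n + l) hml
      show (u n * (s m * (star (s m) * u (-n)))) * (u l * s (d * m) * star (s (d * m)) * u (-l)) = 0
      rw [hs2]
      simp only [mul_assoc]
      rw [← mul_assoc (u (-n)) (u l), hCL2]
      have h0 : star (s m) * (u (-n + l) * (s m * (s d * (star (s m * s d) * u (-l))))) = 0 := by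
        calc star (s m) * (u (-n + l) * (s m * (s d * (star (s m * s d) * u (-l)))))
            = (star (s m) * (u (-n + l) * s m)) * (s d * (star (s m * s d) * u (-l))) := by
              simp only [mul_assoc]
          _ = 0 := by rw [horth, zero_mul]
      rw [h0, mul_zero, mul_zero]
  -- conclude
  calc e * f = e * (f * ∑ l ∈ T, Q l) := by rw [hsum', mul_one]
    _ = ∑ l ∈ T, e * (f * Q l) := by rw [Finset.mul_sum, Finset.mul_sum]
    _ = ∑ l ∈ T, (f * Q l) * e := by
        refine Finset.sum_congr rfl fun l _ => ?_
        rcases hfQ l with h | h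
        · rw [h, heQ l]
        · rw [h, zero_mul, mul_zero]
    _ = (f * ∑ l ∈ T, Q l) * e := by rw [Finset.mul_sum, Finset.sum_mul]
    _ = f * e := by rw [hsum', mul_one]

end Stmt14Orth

lemma stmt14_rep {R : Type*} [CommRing R] [IsDomain R]
    {K : Type*} [Field K] [Algebra R K] [IsFractionRing R K] (a b : K) (hb : b ≠ 0) :
    ∃ n m d : R, d ≠ 0 ∧ m ≠ 0 ∧ a = algebraMap R K n / algebraMap R K d ∧
      b = algebraMap R K m / algebraMap R K d := by
  obtain ⟨n1, d1, hd1, ha⟩ := IsFractionRing.div_surjective (A := R) a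
  obtain ⟨n2, d2, hd2, hb2⟩ := IsFractionRing.div_surjective (A := R) b
  have hd1' : d1 ≠ 0 := nonZeroDivisors.ne_zero hd1
  have hd2' : d2 ≠ 0 := nonZeroDivisors.ne_zero hd2
  have hι : ∀ x : R, x ≠ 0 → algebraMap R K x ≠ 0 := by
    intro x hx h
    exact hx ((IsFractionRing.to_map_eq_zero_iff (K := K)).mp h)
  have h1 := hι d1 hd1'
  have h2 := hι d2 hd2'
  have hn2 : n2 ≠ 0 := by
    intro h
    apply hb
    rw [← hb2, h, map_zero, zero_div]
  refine ⟨n1 * d2, n2 * d1, d1 * d2, mul_ne_zero hd1' hd2', mul_ne_zero hn2 hd1', ?_, ?_⟩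
  · rw [← ha, map_mul, map_mul]
    field_simp
    try ring
  · rw [← hb2, map_mul, map_mul]
    field_simp
    try ring

lemma stmt14_rep2 {R : Type*} [CommRing R] [IsDomain R]
    {K : Type*} [Field K] [Algebra R K] [IsFractionRing R K] (a b a' b' : K)
    (hb : b ≠ 0) (hb' : b' ≠ 0) :
    ∃ n m n' m' d : R, d ≠ 0 ∧ m ≠ 0 ∧ m' ≠ 0 ∧
      a = algebraMap R K n / algebraMap R K d ∧ b = algebraMap R K m / algebraMap R K d ∧
      a' = algebraMap R K n' / algebraMap R K d ∧ b' = algebraMap R K m' / algebraMap R K d := by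
  obtain ⟨n1, m1, d1, hd1, hm1, ha1, hb1⟩ := stmt14_rep (R := R) a b hb
  obtain ⟨n2, m2, d2, hd2, hm2, ha2, hb2⟩ := stmt14_rep (R := R) a' b' hb'
  have hι : ∀ x : R, x ≠ 0 → algebraMap R K x ≠ 0 := by
    intro x hx h
    exact hx ((IsFractionRing.to_map_eq_zero_iff (K := K)).mp h)
  have h1 := hι d1 hd1
  have h2 := hι d2 hd2
  refine ⟨n1 * d2, m1 * d2, n2 * d1, m2 * d1, d1 * d2, mul_ne_zero hd1 hd2,
    mul_ne_zero hm1 hd2, mul_ne_zero hm2 hd1, ?_, ?_, ?_, ?_⟩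
  · rw [ha1, map_mul, map_mul]; field_simp; try ring
  · rw [hb1, map_mul, map_mul]; field_simp; try ring
  · rw [ha2, map_mul, map_mul]; field_simp; try ring
  · rw [hb2, map_mul, map_mul]; field_simp; try ring


/-- With `R`, `K = Frac R` and the Cuntz–Li algebra `A[R]` (modelled
by an arbitrary unital C*-algebra with generators satisfying (CL1)–(CL4)), any map
`π : K ⋊ K× → A[R]` with `π(n/m', m/m') = s_{m'}* u^n s_m` is a partial
representation: `π(0,1) = 1` (PR1), `π(g⁻¹) = π(g)*` (PR2), and
`π(g)π(h)π(h⁻¹) = π(gh)π(h⁻¹)` (PR3), where the group operations on pairs are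
`(u,w)(u',w') = (u + u'w, ww')` and `(u,w)⁻¹ = (-u/w, w⁻¹)`. -/
theorem stmt14 (R : Type*) [CommRing R] [IsDomain R]
    (K : Type*) [Field K] [Algebra R K] [IsFractionRing R K]
    (hfin : ∀ m : R, m ≠ 0 → Finite (R ⧸ Ideal.span {m}))
    (A : Type*) [CStarAlgebra A] (s u : R → A)
    (hiso : ∀ m : R, m ≠ 0 → star (s m) * s m = 1)
    (huni : ∀ n : R, u n * star (u n) = 1 ∧ star (u n) * u n = 1)
    (hCL1 : ∀ m m' : R, m ≠ 0 → m' ≠ 0 → s m * s m' = s (m * m'))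
    (hCL2 : ∀ n n' : R, u n * u n' = u (n + n'))
    (hCL3 : ∀ m n : R, m ≠ 0 → s m * u n = u (m * n) * s m)
    (hCL4 : ∀ m : R, m ≠ 0 → ∀ T : Finset R,
      (∀ c : R ⧸ Ideal.span {m}, ∃! l : R, l ∈ T ∧ Ideal.Quotient.mk (Ideal.span {m}) l = c) →
      ∑ l ∈ T, u l * s m * star (s m) * u (-l) = 1)
    (π : K × K → A)
    (hπ : ∀ n m m' : R, m ≠ 0 → m' ≠ 0 →
      π (algebraMap R K n / algebraMap R K m', algebraMap R K m / algebraMap R K m') =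
        star (s m') * u n * s m) :
    -- (PR1)
    π (0, 1) = 1 ∧
    -- (PR2)
    (∀ a b : K, b ≠ 0 → π (-a / b, b⁻¹) = star (π (a, b))) ∧
    -- (PR3)
    (∀ a b a' b' : K, b ≠ 0 → b' ≠ 0 →
      π (a, b) * π (a', b') * π (-a' / b', b'⁻¹) =
        π (a + a' * b, b * b') * π (-a' / b', b'⁻¹)) := by
  have hu0 : u (0:R) = 1 := stmt14_u_zero u huni hCL2
  have hus : ∀ x : R, star (u x) = u (-x) := stmt14_u_star u huni hCL2
  have hssu : ∀ (c k : R), c ≠ 0 → star (s c) * u (c * k) = u k * star (s c) :=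
    fun c k hc => stmt14_sstar_u s u huni hCL2 hCL3 c k hc
  have hι : ∀ x : R, x ≠ 0 → algebraMap R K x ≠ 0 := by
    intro x hx h
    exact hx ((IsFractionRing.to_map_eq_zero_iff (K := K)).mp h)
  refine ⟨?_, ?_, ?_⟩
  · -- PR1
    have h1 : ((0:K), (1:K)) =
        (algebraMap R K 0 / algebraMap R K 1, algebraMap R K 1 / algebraMap R K 1) := by
      simp
    rw [h1, hπ 0 1 1 one_ne_zero one_ne_zero, hu0, mul_one, hiso 1 one_ne_zero]
  · -- PR2
    intro a b hb
    obtain ⟨n, m, d, hd, hm, ha, hb1⟩ := stmt14_rep (R := R) a b hb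
    have hπab : π (a, b) = star (s d) * u n * s m := by
      rw [show (a, b) = (algebraMap R K n / algebraMap R K d,
          algebraMap R K m / algebraMap R K d) from by rw [ha, hb1]]
      exact hπ n m d hm hd
    have hιd := hι d hd
    have hιm := hι m hm
    have e1 : -a / b = algebraMap R K (-n) / algebraMap R K m := by
      rw [ha, hb1, map_neg]
      field_simp
    have e2 : b⁻¹ = algebraMap R K d / algebraMap R K m := by rw [hb1, inv_div]
    rw [show (-a / b, b⁻¹) = (algebraMap R K (-n) / algebraMap R K m,
        algebraMap R K d / algebraMap R K m) from by rw [e1, e2]]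
    rw [hπ (-n) d m hd hm, hπab]
    simp only [star_mul, star_star, hus, mul_assoc]
  · -- PR3
    intro a b a' b' hb hb'
    obtain ⟨n, m, n', m', d, hd, hm, hm', ha, hb1, ha', hb1'⟩ :=
      stmt14_rep2 (R := R) a b a' b' hb hb'
    have hιd := hι d hd
    have hιm := hι m hm
    have hιm' := hι m' hm'
    have hπg : π (a, b) = star (s d) * u n * s m := by
      rw [show (a, b) = (algebraMap R K n / algebraMap R K d,
          algebraMap R K m / algebraMap R K d) from by rw [ha, hb1]]
      exact hπ n m d hm hd
    have hπh : π (a', b') = star (s d) * u n' * s m' := by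
      rw [show (a', b') = (algebraMap R K n' / algebraMap R K d,
          algebraMap R K m' / algebraMap R K d) from by rw [ha', hb1']]
      exact hπ n' m' d hm' hd
    have e1 : -a' / b' = algebraMap R K (-n') / algebraMap R K m' := by
      rw [ha', hb1', map_neg]
      field_simp
    have e2 : b'⁻¹ = algebraMap R K d / algebraMap R K m' := by rw [hb1', inv_div]
    have hπhi : π (-a' / b', b'⁻¹) = star (s m') * u (-n') * s d := by
      rw [show (-a' / b', b'⁻¹) = (algebraMap R K (-n') / algebraMap R K m',
          algebraMap R K d / algebraMap R K m') from by rw [e1, e2]]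
      exact hπ (-n') d m' hd hm'
    have e3 : a + a' * b = algebraMap R K (n * d + n' * m) / algebraMap R K (d * d) := by
      rw [ha, ha', hb1, map_add, map_mul, map_mul, map_mul]
      field_simp
    have e4 : b * b' = algebraMap R K (m * m') / algebraMap R K (d * d) := by
      rw [hb1, hb1', map_mul, map_mul]
      field_simp
    have hπgh : π (a + a' * b, b * b') =
        star (s (d * d)) * u (n * d + n' * m) * s (m * m') := by
      rw [show (a + a' * b, b * b') = (algebraMap R K (n * d + n' * m) / algebraMap R K (d * d),
          algebraMap R K (m * m') / algebraMap R K (d * d)) from by rw [e3, e4]]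
      exact hπ (n * d + n' * m) (m * m') (d * d) (mul_ne_zero hm hm') (mul_ne_zero hd hd)
    rw [hπg, hπh, hπhi, hπgh]
    -- now pure C*-algebra
    have hes : s d * star (s d) * s d = s d := by rw [mul_assoc, hiso d hd, mul_one]
    have hcomm := stmt14_commute s u hfin hiso huni hCL1 hCL2 hCL3 hCL4 d m' n' hd hm'
    have hPs : u n' * (s m' * (star (s m') * (u (-n') * s d))) =
        s d * (star (s d) * (u n' * (s m' * (star (s m') * (u (-n') * s d))))) := by
      calc u n' * (s m' * (star (s m') * (u (-n') * s d)))
          = (u n' * (s m' * (star (s m') * u (-n')))) * s d := by simp only [mul_assoc]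
        _ = (u n' * (s m' * (star (s m') * u (-n')))) * (s d * star (s d) * s d) := by
            rw [hes]
        _ = (u n' * (s m' * (star (s m') * u (-n')))) * (s d * star (s d)) * s d := by
            rw [← mul_assoc]
        _ = (s d * star (s d)) * (u n' * (s m' * (star (s m') * u (-n')))) * s d := by
            rw [← hcomm]
        _ = s d * (star (s d) * (u n' * (s m' * (star (s m') * (u (-n') * s d))))) := by
            simp only [mul_assoc]
    have hsw : ∀ X : A, s m * (s d * X) = s d * (s m * X) := by
      intro X
      rw [← mul_assoc, hCL1 m d hm hd, mul_comm m d, ← hCL1 d m hd hm, mul_assoc]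
    have key : star (s d) * (s m * (u n' * (s m' * (star (s m') * (u (-n') * s d))))) =
        s m * (star (s d) * (u n' * (s m' * (star (s m') * (u (-n') * s d))))) := by
      conv_lhs => rw [hPs]
      rw [hsw]
      rw [← mul_assoc (star (s d)) (s d), hiso d hd, one_mul]
    simp only [mul_assoc]
    rw [← hCL1 d d hd hd, ← hCL1 m m' hm hm', star_mul]
    rw [show n * d + n' * m = d * n + m * n' by ring, ← hCL2]
    simp only [mul_assoc]
    rw [← mul_assoc (star (s d)) (u (d * n)), hssu d n hd]
    rw [← mul_assoc (u (m * n')) (s m), ← hCL3 m n' hm]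
    simp only [mul_assoc]
    rw [key]
end

section
/- Let R be an integral domain with finite quotients, K = Frac(R), and R̂_K = lim← (R+(w))/(w) over w ∈ K×. The map ρ : R̂_K → P(K ⋊ K×) defined by ρ((u_w + (w))_w) = {(u_w + rw, w) : w ∈ K×, r ∈ R} is injective. -/
set_option linter.unusedSectionVars false
set_option linter.unusedVariables false

variable (R : Type*) [CommRing R] [IsDomain R]
variable (K : Type*) [Field K] [Algebra R K] [IsFractionRing R K]

/-- The map `ρ : R̂_K → P(K ⋊ K×)`,
`ρ((u_w + (w))_w) = {(u_w + rw, w) : w ∈ K×, r ∈ R}` — equivalently, the pair `(v, w)`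
(with `w ≠ 0`) lies in `ρ(x)` iff the class of `v` in `K/(w)` is `x_w` — is injective. -/
theorem stmt15 (hfin : ∀ m : R, m ≠ 0 → Finite (R ⧸ Ideal.span {m})) :
    Function.Injective (fun x : RhatK R K =>
      {p : K × K | ∃ h : p.2 ≠ 0,
        (QuotientAddGroup.mk p.1 : K ⧸ Jw R K p.2) = x.1 ⟨p.2, h⟩}) := by
  intro x y hxy
  ext w
  obtain ⟨r, hr⟩ := x.2.1 w
  have hmem : (algebraMap R K r, w.1) ∈
      {p : K × K | ∃ h : p.2 ≠ 0,
        (QuotientAddGroup.mk p.1 : K ⧸ Jw R K p.2) = x.1 ⟨p.2, h⟩} := ⟨w.2, hr.symm⟩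
  simp only at hxy
  rw [hxy] at hmem
  obtain ⟨h, hy⟩ := hmem
  rw [hr]
  exact hy
end

section
/- Let R be an integral domain with finite quotients, K = Frac(R), and let θ be the partial action of K ⋊ K× on R̂_K with domains R̂_{(u,w)} = {x ∈ R̂_K : x_w = u + (w)} and θ_{(u,w)}(x) = (u + w·x, by the affine action). Then θ is minimal: every point of R̂_K has dense orbit. -/
set_option linter.unusedSectionVars false
set_option linter.unusedVariables false

variable (R : Type*) [CommRing R] [IsDomain R]
variable (K : Type*) [Field K] [Algebra R K] [IsFractionRing R K]

/- ## Auxiliary material -/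

lemma mem_Jw {w v : K} : v ∈ Jw R K w ↔ ∃ r : R, v = algebraMap R K r * w := by
  rw [Jw, Submodule.mem_toAddSubgroup, Submodule.mem_span_singleton]
  constructor
  · rintro ⟨r, hr⟩; exact ⟨r, by rw [← hr, Algebra.smul_def]⟩
  · rintro ⟨r, rfl⟩; exact ⟨r, Algebra.smul_def r w⟩

lemma projw_mk (w w' : K) (h : ∃ r : R, w' = w * algebraMap R K r) (v : K) :
    projw R K w w' h (QuotientAddGroup.mk v) = QuotientAddGroup.mk v := by
  simp [projw, QuotientAddGroup.map_mk]
  rfl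

/-- Multiplication by `w` as a map `K/(a) → K/(wa)`. -/
def phiw (w a b : K) (h : b = w * a) : K ⧸ Jw R K a →+ K ⧸ Jw R K b :=
  QuotientAddGroup.map _ _ (AddMonoidHom.mulLeft w) (fun v hv => by
    obtain ⟨r, hr⟩ := (mem_Jw R K).1 hv
    refine (mem_Jw R K).2 ⟨r, ?_⟩
    simp only [AddMonoidHom.coe_mulLeft]
    rw [hr, h]; ring)

lemma phiw_mk (w a b : K) (h : b = w * a) (v : K) :
    phiw R K w a b h (QuotientAddGroup.mk v) = QuotientAddGroup.mk (w * v) := by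
  simp [phiw, QuotientAddGroup.map_mk]

/-- The underlying family of `θ_{(u,w)}(x)`. -/
def theta (x : RhatK R K) (u w : K) (hw : w ≠ 0) :
    ∀ w' : {w : K // w ≠ 0}, K ⧸ Jw R K w'.1 :=
  fun w' => QuotientAddGroup.mk u +
    phiw R K w (w⁻¹ * w'.1) w'.1 ((mul_inv_cancel_left₀ hw w'.1).symm)
      (x.1 ⟨w⁻¹ * w'.1, mul_ne_zero (inv_ne_zero hw) w'.2⟩)

lemma theta_eval (x : RhatK R K) (u w : K) (hw : w ≠ 0) (w' : {w : K // w ≠ 0}) (v : K)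
    (hv : x.1 ⟨w⁻¹ * w'.1, mul_ne_zero (inv_ne_zero hw) w'.2⟩ = QuotientAddGroup.mk v) :
    theta R K x u w hw w' = QuotientAddGroup.mk (u + w * v) := by
  rw [theta, hv, phiw_mk]
  rfl

lemma theta_mem (x : RhatK R K) (u w : K) (hw : w ≠ 0)
    (hdom : x.1 ⟨w⁻¹, inv_ne_zero hw⟩ = QuotientAddGroup.mk (-u / w)) :
    (∀ w' : {w : K // w ≠ 0}, ∃ r : R,
        theta R K x u w hw w' = QuotientAddGroup.mk (algebraMap R K r)) ∧
    ∀ (w₁ w₂ : {w : K // w ≠ 0}) (h : ∃ r : R, w₂.1 = w₁.1 * algebraMap R K r),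
      projw R K w₁.1 w₂.1 h (theta R K x u w hw w₂) = theta R K x u w hw w₁ := by
  constructor
  · intro w'
    obtain ⟨r₀, h₀⟩ := x.2.1 ⟨w⁻¹ * w'.1, mul_ne_zero (inv_ne_zero hw) w'.2⟩
    obtain ⟨⟨a, b⟩, hab⟩ := IsLocalization.surj (nonZeroDivisors R) w'.1
    have hb : algebraMap R K (b : R) ≠ 0 :=
      IsFractionRing.to_map_ne_zero_of_mem_nonZeroDivisors b.2
    have ha : algebraMap R K a ≠ 0 := by
      rw [← hab]; exact mul_ne_zero w'.2 hb
    have hdne : w⁻¹ * algebraMap R K a ≠ 0 := mul_ne_zero (inv_ne_zero hw) ha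
    obtain ⟨r₂, h₂⟩ := x.2.1 ⟨w⁻¹ * algebraMap R K a, hdne⟩
    have hc1 := x.2.2 ⟨w⁻¹, inv_ne_zero hw⟩ ⟨w⁻¹ * algebraMap R K a, hdne⟩ ⟨a, rfl⟩
    rw [h₂, projw_mk, hdom] at hc1
    obtain ⟨t₁, ht₁⟩ := (mem_Jw R K).1 (QuotientAddGroup.eq.1 hc1)
    have hc2 := x.2.2 ⟨w⁻¹ * w'.1, mul_ne_zero (inv_ne_zero hw) w'.2⟩
      ⟨w⁻¹ * algebraMap R K a, hdne⟩ ⟨b, by rw [mul_assoc, hab]⟩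
    rw [h₂, projw_mk, h₀] at hc2
    obtain ⟨t₂, ht₂⟩ := (mem_Jw R K).1 (QuotientAddGroup.eq.1 hc2)
    refine ⟨-t₁, ?_⟩
    rw [theta_eval R K x u w hw w' _ h₀]
    refine QuotientAddGroup.eq.2 ((mem_Jw R K).2 ⟨-t₂, ?_⟩)
    rw [map_neg, map_neg]
    field_simp at ht₁ ht₂
    linear_combination ht₁ - ht₂
  · intro w₁ w₂ h
    obtain ⟨r, hr⟩ := h
    obtain ⟨r₁, h₁⟩ := x.2.1 ⟨w⁻¹ * w₁.1, mul_ne_zero (inv_ne_zero hw) w₁.2⟩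
    obtain ⟨r₂, h₂⟩ := x.2.1 ⟨w⁻¹ * w₂.1, mul_ne_zero (inv_ne_zero hw) w₂.2⟩
    have hc := x.2.2 ⟨w⁻¹ * w₁.1, mul_ne_zero (inv_ne_zero hw) w₁.2⟩
      ⟨w⁻¹ * w₂.1, mul_ne_zero (inv_ne_zero hw) w₂.2⟩ ⟨r, by show w⁻¹ * w₂.1 = w⁻¹ * w₁.1 * algebraMap R K r; rw [hr]; ring⟩
    rw [h₁, h₂, projw_mk] at hc
    obtain ⟨t, ht⟩ := (mem_Jw R K).1 (QuotientAddGroup.eq.1 hc)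
    rw [theta_eval R K x u w hw w₂ _ h₂, theta_eval R K x u w hw w₁ _ h₁, projw_mk]
    refine QuotientAddGroup.eq.2 ((mem_Jw R K).2 ⟨t, ?_⟩)
    field_simp at ht
    linear_combination ht

lemma theta_agrees (x y : RhatK R K) (W : K) (hW : W ≠ 0) :
    ∃ u : K,
      x.1 ⟨W⁻¹, inv_ne_zero hW⟩ = QuotientAddGroup.mk (-u / W) ∧
      theta R K x u W hW ⟨W, hW⟩ = y.1 ⟨W, hW⟩ := by
  obtain ⟨s, hs⟩ := y.2.1 ⟨W, hW⟩
  obtain ⟨r₁, h₁⟩ := x.2.1 ⟨W⁻¹, inv_ne_zero hW⟩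
  refine ⟨algebraMap R K s - W * algebraMap R K r₁, ?_, ?_⟩
  · rw [h₁]
    refine QuotientAddGroup.eq.2 ((mem_Jw R K).2 ⟨-s, ?_⟩)
    rw [map_neg]
    field_simp
    ring
  · obtain ⟨r₂, h₂⟩ := x.2.1 ⟨W⁻¹ * W, mul_ne_zero (inv_ne_zero hW) hW⟩
    rw [theta_eval R K x _ W hW ⟨W, hW⟩ _ h₂, hs]
    refine QuotientAddGroup.eq.2 ((mem_Jw R K).2 ⟨r₁ - r₂, ?_⟩)
    rw [map_sub]
    ring

/-- The affine partial action `θ` of `K ⋊ K×` on `R̂_K` — where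
`θ_{(u,w)}`, defined on `R̂_{(u,w)⁻¹} = {x : x_{w⁻¹} = -u/w + (w⁻¹)}`, sends `x` to the
family `(u + w·x_{w⁻¹w'} + (w'))_{w'}` — is minimal: every point `x ∈ R̂_K` has dense
orbit `O_x = {θ_g(x) : g ∈ K ⋊ K×, x ∈ R̂_{g⁻¹}}`. -/
theorem stmt17 (hfin : ∀ m : R, m ≠ 0 → Finite (R ⧸ Ideal.span {m}))
    (x : RhatK R K) :
    Dense {y : RhatK R K | ∃ (u w : K) (hw : w ≠ 0),
      -- `x` lies in the domain `R̂_{(u,w)⁻¹}`, `(u,w)⁻¹ = (-u/w, w⁻¹)`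
      x.1 ⟨w⁻¹, inv_ne_zero hw⟩ = (QuotientAddGroup.mk (-u / w) : K ⧸ Jw R K w⁻¹) ∧
      -- `y = θ_{(u,w)}(x)`: for every `w'`, `y_{w'} = u + w·x_{w⁻¹w'} + (w')`
      ∀ (w' : K) (hw' : w' ≠ 0) (v : K),
        x.1 ⟨w⁻¹ * w', mul_ne_zero (inv_ne_zero hw) hw'⟩ =
          (QuotientAddGroup.mk v : K ⧸ Jw R K (w⁻¹ * w')) →
        y.1 ⟨w', hw'⟩ = (QuotientAddGroup.mk (u + w * v) : K ⧸ Jw R K w')} := by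
  classical
  intro y
  rw [mem_closure_iff]
  intro o ho hyo
  obtain ⟨V, hV, rfl⟩ := isOpen_induced_iff.1 ho
  obtain ⟨I, U, hU, hpi⟩ := isOpen_pi_iff.1 hV y.1 hyo
  choose p hp using fun i : {w : K // w ≠ 0} => IsLocalization.surj (nonZeroDivisors R) i.1
  -- hp i : i.1 * algebraMap R K ((p i).2 : R) = algebraMap R K (p i).1
  have hnum : ∀ i : {w : K // w ≠ 0}, algebraMap R K (p i).1 ≠ 0 := fun i => by
    rw [← hp i]
    exact mul_ne_zero i.2 (IsFractionRing.to_map_ne_zero_of_mem_nonZeroDivisors (p i).2.2)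
  set W : K := algebraMap R K (∏ i ∈ I, (p i).1) with hWdef
  have hW : W ≠ 0 := by
    rw [hWdef, map_prod]
    exact Finset.prod_ne_zero_iff.2 fun i _ => hnum i
  have hdvd : ∀ i ∈ I, ∃ r : R, W = i.1 * algebraMap R K r := by
    intro i hi
    refine ⟨((p i).2 : R) * ∏ j ∈ I.erase i, (p j).1, ?_⟩
    rw [map_mul, ← mul_assoc, hp i, hWdef, map_prod, map_prod,
      ← Finset.mul_prod_erase I _ hi]
  obtain ⟨u, hdom, hagree⟩ := theta_agrees R K x y W hW
  have hmem := theta_mem R K x u W hW hdom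
  refine ⟨⟨theta R K x u W hW, hmem⟩, ?_, u, W, hW, hdom, ?_⟩
  · apply hpi
    intro i hi
    have h1 := hmem.2 i ⟨W, hW⟩ (hdvd i (Finset.mem_coe.1 hi))
    have h2 := y.2.2 i ⟨W, hW⟩ (hdvd i (Finset.mem_coe.1 hi))
    rw [hagree, h2] at h1
    show theta R K x u W hW i ∈ U i
    rw [← h1]
    exact (hU i (Finset.mem_coe.1 hi)).2
  · intro w' hw' v hv
    exact theta_eval R K x u W hW ⟨w', hw'⟩ v hv
end
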